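/- The ranking 0/1 loss of the sign classifier satisfies L_r^{0/1}(sgn∘f(x), y) ≤ (c / min{|Y⁺|,|Y⁻|}) · L_h^{0/1}(sgn∘f(x), y); in particular L_r^{0/1}(sgn∘f(x), y) ≤ c · L_h^{0/1}(sgn∘f(x), y). -/

import Mathlib

/-!
A pair `(p, q)` with `y p = 1`, `y q = -1` can only be misranked (`H p ≤ H q`) if `H` errs on
`p` or on `q`, since `H p = 1 > -1 = H q` otherwise. Counting misranked pairs therefore gives
`S ≤ |Y⁻| · E⁺ + |Y⁺| · E⁻`, where `E^±` counts the errors on `Y^±`; dividing by `|Y⁺| |Y⁻|`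
bounds the ranking loss by `E⁺ / |Y⁺| + E⁻ / |Y⁻| ≤ (E⁺ + E⁻) / min |Y⁺| |Y⁻|`.
-/

open Finset

lemma div_add_div_le_add_div_min {a b x y : ℝ} (ha : 0 < a) (hb : 0 < b) (hx : 0 ≤ x)
    (hy : 0 ≤ y) : x / a + y / b ≤ (x + y) / min a b := by
  rw [add_div]
  have hm : 0 < min a b := lt_min ha hb
  gcongr
  exacts [min_le_left a b, min_le_right a b]

section Ranking

variable {ι : Type*} (H y : ι → ℝ)

lemma misranked_indicator_le_errors {p q : ι} (hp : y p = 1) (hq : y q = -1) :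
    (if H p ≤ H q then (1 : ℝ) else 0) ≤
      (if H p ≠ y p then 1 else 0) + (if H q ≠ y q then 1 else 0) := by
  split_ifs <;> norm_num
  simp only [ne_eq, not_not] at *
  linarith

lemma sum_misranked_le {P N : Finset ι} (hP : ∀ p ∈ P, y p = 1) (hN : ∀ q ∈ N, y q = -1) :
    ∑ p ∈ P, ∑ q ∈ N, (if H p ≤ H q then (1 : ℝ) else 0) ≤
      #N * ∑ p ∈ P, (if H p ≠ y p then (1 : ℝ) else 0) +
        #P * ∑ q ∈ N, (if H q ≠ y q then (1 : ℝ) else 0) := by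
  calc _ ≤ ∑ p ∈ P, ∑ q ∈ N,
          ((if H p ≠ y p then (1 : ℝ) else 0) + (if H q ≠ y q then 1 else 0)) :=
        sum_le_sum fun p hp => sum_le_sum fun q hq =>
          misranked_indicator_le_errors H y (hP p hp) (hN q hq)
    _ = _ := by simp only [sum_add_distrib, sum_const, nsmul_eq_mul, mul_sum]

lemma ranking_loss_le_div_min [DecidableEq ι] {P N : Finset ι} (hP : ∀ p ∈ P, y p = 1)
    (hN : ∀ q ∈ N, y q = -1) (hPne : P.Nonempty) (hNne : N.Nonempty) :
    (1 / ((#P : ℝ) * #N)) * ∑ p ∈ P, ∑ q ∈ N, (if H p ≤ H q then (1 : ℝ) else 0) ≤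
      (∑ j ∈ P ∪ N, (if H j ≠ y j then (1 : ℝ) else 0)) / min (#P : ℝ) #N := by
  have hPN : Disjoint P N := disjoint_left.mpr fun j hjP hjN => by
    have := (hP j hjP).symm.trans (hN j hjN)
    norm_num at this
  have hPpos : (0 : ℝ) < #P := by exact_mod_cast hPne.card_pos
  have hNpos : (0 : ℝ) < #N := by exact_mod_cast hNne.card_pos
  calc _ ≤ (1 / ((#P : ℝ) * #N)) * (#N * ∑ p ∈ P, (if H p ≠ y p then (1 : ℝ) else 0) +
          #P * ∑ q ∈ N, (if H q ≠ y q then (1 : ℝ) else 0)) := by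
        gcongr
        exact sum_misranked_le H y hP hN
    _ = (∑ p ∈ P, (if H p ≠ y p then (1 : ℝ) else 0)) / #P +
          (∑ q ∈ N, (if H q ≠ y q then (1 : ℝ) else 0)) / #N := by
        field_simp
    _ ≤ _ := by
        rw [sum_union hPN]
        exact div_add_div_le_add_div_min hPpos hNpos (by positivity) (by positivity)

end Ranking

theorem ranking_le_c_mul_hamming_general (c : ℕ) (hc : 1 ≤ c)
    (H : Fin c → ℝ)
    (y : Fin c → ℝ)
    (Yp Yn : Finset (Fin c))
    (hYp : Yp = Finset.univ.filter (fun j => y j = 1))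
    (hYn : Yn = Finset.univ.filter (fun j => y j = -1))
    (hp : Yp.Nonempty) (hn : Yn.Nonempty) :
    (1 / ((Yp.card : ℝ) * (Yn.card : ℝ))) *
        ∑ p ∈ Yp, ∑ q ∈ Yn, (if H p ≤ H q then (1 : ℝ) else 0) ≤
      ((c : ℝ) / min (Yp.card : ℝ) (Yn.card : ℝ)) *
        ((1 / (c : ℝ)) * ∑ j, (if H j ≠ y j then (1 : ℝ) else 0)) ∧
    (1 / ((Yp.card : ℝ) * (Yn.card : ℝ))) *
        ∑ p ∈ Yp, ∑ q ∈ Yn, (if H p ≤ H q then (1 : ℝ) else 0) ≤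
      (c : ℝ) * ((1 / (c : ℝ)) * ∑ j, (if H j ≠ y j then (1 : ℝ) else 0)) := by
  have hPy : ∀ p ∈ Yp, y p = 1 := by simp [hYp]
  have hNy : ∀ q ∈ Yn, y q = -1 := by simp [hYn]
  have hmin : (1 : ℝ) ≤ min (#Yp : ℝ) #Yn :=
    le_min (by exact_mod_cast hp.card_pos) (by exact_mod_cast hn.card_pos)
  have hM : 0 ≤ ∑ j, (if H j ≠ y j then (1 : ℝ) else 0) := by positivity
  have key := (ranking_loss_le_div_min H y hPy hNy hp hn).trans <|
    div_le_div_of_nonneg_right (sum_le_univ_sum_of_nonneg fun _ => by positivity)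
      (zero_le_one.trans hmin)
  have hc0 : (c : ℝ) ≠ 0 := by positivity
  refine ⟨?_, ?_⟩
  · calc _ ≤ _ := key
      _ = _ := by field_simp
  · calc _ ≤ _ := key
      _ ≤ _ := div_le_self hM hmin
      _ = _ := by field_simp

theorem ranking_le_c_mul_hamming (c : ℕ) (hc : 1 ≤ c)
    (H : Fin c → ℝ) (hH : ∀ j, H j = -1 ∨ H j = 1)
    (y : Fin c → ℝ) (hy : ∀ j, y j = -1 ∨ y j = 1)
    (Yp Yn : Finset (Fin c))
    (hYp : Yp = Finset.univ.filter (fun j => y j = 1))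
    (hYn : Yn = Finset.univ.filter (fun j => y j = -1))
    (hp : Yp.Nonempty) (hn : Yn.Nonempty) :
    (1 / ((Yp.card : ℝ) * (Yn.card : ℝ))) *
        ∑ p ∈ Yp, ∑ q ∈ Yn, (if H p ≤ H q then (1 : ℝ) else 0) ≤
      ((c : ℝ) / min (Yp.card : ℝ) (Yn.card : ℝ)) *
        ((1 / (c : ℝ)) * ∑ j, (if H j ≠ y j then (1 : ℝ) else 0)) ∧
    (1 / ((Yp.card : ℝ) * (Yn.card : ℝ))) *
        ∑ p ∈ Yp, ∑ q ∈ Yn, (if H p ≤ H q then (1 : ℝ) else 0) ≤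
      (c : ℝ) * ((1 / (c : ℝ)) * ∑ j, (if H j ≠ y j then (1 : ℝ) else 0)) :=
  ranking_le_c_mul_hamming_general c hc H y Yp Yn hYp hYn hp hn
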